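/- arXiv:1408.2179 — 2 statements merged into one kernel-verified Lean document; each statement's English description precedes it below -/
import Mathlib

section
/- Let s, t, α satisfy s² + t² = 1, t > 0, 0 < α ≤ 1, and s ≤ α/2 (so that the edge joining (1,0) and (αs,αt) is the longest edge of the triangle K with vertices (0,0), (1,0), (αs,αt)). Then 1/√(1−|s|) ≤ 2√2 · R_K, where R_K is the circumradius of K. -/
open MeasureTheory ENNReal Real

noncomputable section

/-- The plane `ℝ²` as a Euclidean space. -/
abbrev E2 : Type := EuclideanSpace ℝ (Fin 2)

/-- A point of `ℝ²` given by its two coordinates. -/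
noncomputable def pt (a b : ℝ) : E2 := WithLp.toLp 2 ![a, b]

/-- The partial derivative `∂f/∂xᵢ` of a function `f : ℝ² → ℝ`. -/
noncomputable def pderiv2 (i : Fin 2) (f : E2 → ℝ) : E2 → ℝ :=
  fun x => fderiv ℝ f x (EuclideanSpace.single i 1)

/-- The iterated partial derivative `∂^{a+b} f/(∂x₁^a ∂x₂^b)`. -/
noncomputable def pdxy (a b : ℕ) (f : E2 → ℝ) : E2 → ℝ :=
  (pderiv2 0)^[a] ((pderiv2 1)^[b] f)

/-- The Sobolev seminorm `|v|_{m,p,K}`: for finite `p` this is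
`(∑_{|δ|=m} ∫_K |∂^δ v|^p dx)^{1/p}` (the multi-indices `δ` of order `m` in two
variables are `(i, m-i)`, `i = 0,…,m`), and for `p = ∞` it is
`max_{|δ|=m} ess sup_K |∂^δ v|`. -/
noncomputable def sobSemi (m : ℕ) (p : ℝ≥0∞) (K : Set E2) (v : E2 → ℝ) : ℝ≥0∞ :=
  if p = ∞ then ⨆ i : Fin (m + 1), eLpNorm (pdxy i (m - i) v) ∞ (volume.restrict K)
  else (∑ i : Fin (m + 1),
      ∫⁻ x in K, ENNReal.ofReal |pdxy (i : ℕ) (m - (i : ℕ)) v x| ^ p.toReal ∂volume) ^ (1 / p.toReal)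

/-- Membership in the Sobolev space `W^{k,p}(K)` (smooth representative with all
seminorms up to order `k` finite). -/
def MemW (k : ℕ) (p : ℝ≥0∞) (K : Set E2) (v : E2 → ℝ) : Prop :=
  ContDiff ℝ k v ∧ ∀ m ≤ k, sobSemi m p K v ≠ ∞

/-- The (closed) triangle with vertices `x₁, x₂, x₃`. -/
def triSet (x₁ x₂ x₃ : E2) : Set E2 := convexHull ℝ {x₁, x₂, x₃}

/-- The set `Σ^k(K)` of Lagrange interpolation nodes of order `k` of the triangle
with vertices `x₁, x₂, x₃`: the points with barycentric coordinates `(a₁/k, a₂/k, a₃/k)`,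
`aᵢ ∈ ℕ`, `a₁+a₂+a₃ = k`. -/
def lagrangeNodes (k : ℕ) (x₁ x₂ x₃ : E2) : Set E2 :=
  {x | ∃ a : Fin 3 → ℕ, a 0 + a 1 + a 2 = k ∧
    x = ((a 0 : ℝ) / k) • x₁ + ((a 1 : ℝ) / k) • x₂ + ((a 2 : ℝ) / k) • x₃}

/-- `q : ℝ² → ℝ` is a polynomial of (total) degree at most `k`. -/
def IsPolyDeg (k : ℕ) (q : E2 → ℝ) : Prop :=
  ∃ P : MvPolynomial (Fin 2) ℝ, P.totalDegree ≤ k ∧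
    ∀ x : E2, q x = MvPolynomial.eval (fun i => x i) P

/-- The constant `B_p^{m,k}(K) = sup { |v|_{m,p,K}/|v|_{k+1,p,K} : v ∈ T_p^k(K) }`,
where `T_p^k(K)` is the set of `W^{k+1,p}(K)` functions vanishing at all Lagrange
nodes in `Σ^k(K)`. -/
noncomputable def Bconst (m k : ℕ) (p : ℝ≥0∞) (x₁ x₂ x₃ : E2) : ℝ≥0∞ :=
  ⨆ v : {v : E2 → ℝ // MemW (k + 1) p (triSet x₁ x₂ x₃) v ∧
      ∀ x ∈ lagrangeNodes k x₁ x₂ x₃, v x = 0},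
    sobSemi m p (triSet x₁ x₂ x₃) (v : E2 → ℝ) /
      sobSemi (k + 1) p (triSet x₁ x₂ x₃) (v : E2 → ℝ)

/-- The length `h_K` of the longest edge of the triangle with vertices `x₁, x₂, x₃`. -/
noncomputable def longestEdge (x₁ x₂ x₃ : E2) : ℝ :=
  max (dist x₁ x₂) (max (dist x₁ x₃) (dist x₂ x₃))

/-- The maximum interior angle of the triangle with vertices `x₁, x₂, x₃`. -/
noncomputable def maxAngle (x₁ x₂ x₃ : E2) : ℝ :=
  max (EuclideanGeometry.angle x₂ x₁ x₃)
    (max (EuclideanGeometry.angle x₁ x₂ x₃) (EuclideanGeometry.angle x₁ x₃ x₂))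

end

/-! The circumcentre of `(0,0)`, `(1,0)`, `(x,y)` lies on the line `x = 1/2`, at height `v` with
`2vy = x² + y² - x`, whence `4y²R² = y² + (x² + y² - x)²`. For the vertex `(αs, αt)` this gives
`4t²R² = t² + (α - s)² = 1 + α² - 2αs ≥ (1 + |s|)/2`, because `|s| ≤ 1` and `2αs ≤ α²`; since
`t² = (1 - |s|)(1 + |s|)`, this is `1/(1 - |s|) ≤ 8R²`. -/

lemma dist_pt_sq (c : E2) (a b : ℝ) :
    dist c (pt a b) ^ 2 = (c 0 - a) ^ 2 + (c 1 - b) ^ 2 := by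
  rw [EuclideanSpace.dist_eq, Real.sq_sqrt (by positivity)]
  simp [pt, Fin.sum_univ_two, Real.dist_eq, sq_abs]

lemma four_mul_sq_mul_sq_eq_of_dist_eq {x y R : ℝ} {c : E2}
    (h₁ : dist c (pt 0 0) = R) (h₂ : dist c (pt 1 0) = R) (h₃ : dist c (pt x y) = R) :
    4 * y ^ 2 * R ^ 2 = y ^ 2 + (x ^ 2 + y ^ 2 - x) ^ 2 := by
  have e₁ := dist_pt_sq c 0 0
  have e₂ := dist_pt_sq c 1 0
  have e₃ := dist_pt_sq c x y
  rw [h₁] at e₁; rw [h₂] at e₂; rw [h₃] at e₃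
  have hc₀ : c 0 = 1 / 2 := by linear_combination (e₂ - e₁) / 2
  have hc₁ : 2 * c 1 * y = x ^ 2 + y ^ 2 - x := by
    rw [hc₀] at e₁ e₃; linear_combination e₃ - e₁
  rw [← hc₁]
  linear_combination 4 * y ^ 2 * e₁ + 4 * y ^ 2 * (c 0 + 1 / 2) * hc₀

lemma sq_le_two_mul_one_sub_abs_mul {s t α : ℝ} (hst : s ^ 2 + t ^ 2 = 1) (hα : 0 < α)
    (hs : s ≤ α / 2) :
    t ^ 2 ≤ 2 * (1 - |s|) * (t ^ 2 + (α - s) ^ 2) := by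
  have hs_le : |s| ≤ 1 := (sq_le_one_iff_abs_le_one s).1 (by nlinarith)
  have ht_sq : t ^ 2 = (1 - |s|) * (1 + |s|) := by linear_combination hst + sq_abs s
  have hαs : 2 * (α * s) ≤ α ^ 2 := by nlinarith
  calc t ^ 2 = (1 - |s|) * (1 + |s|) := ht_sq
    _ ≤ (1 - |s|) * (2 * (t ^ 2 + (α - s) ^ 2)) := by
        gcongr
        nlinarith
    _ = 2 * (1 - |s|) * (t ^ 2 + (α - s) ^ 2) := by ring

theorem one_div_sqrt_le_circumradius_general
    (s t α : ℝ) (hst : s ^ 2 + t ^ 2 = 1) (ht : 0 < t) (hα0 : 0 < α)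
    (hs : s ≤ α / 2)
    (R : ℝ) (c : E2)
    (hc1 : dist c (pt 0 0) = R) (hc2 : dist c (pt 1 0) = R)
    (hc3 : dist c (pt (α * s) (α * t)) = R) :
    1 / Real.sqrt (1 - |s|) ≤ 2 * Real.sqrt 2 * R := by
  have hR : 0 ≤ R := hc1 ▸ dist_nonneg
  have hR_sq : 4 * t ^ 2 * R ^ 2 = t ^ 2 + (α - s) ^ 2 := by
    refine mul_left_cancel₀ (pow_ne_zero 2 hα0.ne') ?_
    linear_combination four_mul_sq_mul_sq_eq_of_dist_eq hc1 hc2 hc3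
      + α ^ 2 * (α ^ 2 * (s ^ 2 + t ^ 2) + α ^ 2 - 2 * α * s) * hst
  have hs_lt : 0 < 1 - |s| := by
    have : s ^ 2 < 1 := by nlinarith
    linarith [(sq_lt_one_iff_abs_lt_one s).1 this]
  have h_inv : 1 / (1 - |s|) ≤ 8 * R ^ 2 := by
    rw [div_le_iff₀ hs_lt]
    nlinarith [sq_le_two_mul_one_sub_abs_mul hst hα0 hs, pow_pos ht 2]
  calc 1 / Real.sqrt (1 - |s|) = Real.sqrt (1 / (1 - |s|)) := by
        rw [one_div, one_div, Real.sqrt_inv]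
    _ ≤ Real.sqrt ((2 * Real.sqrt 2 * R) ^ 2) := by
        gcongr
        rw [mul_pow, mul_pow, Real.sq_sqrt zero_le_two]
        linarith
    _ = 2 * Real.sqrt 2 * R := Real.sqrt_sq (by positivity)

/-- Lemma 3.2 / `kobayashi`.  Let `s, t, α` satisfy `s² + t² = 1`,
`t > 0`, `0 < α ≤ 1` and `s ≤ α/2`, and let `R_K` be the circumradius of the
triangle `K` with vertices `(0,0)`, `(1,0)`, `(αs, αt)` (characterized by the
existence of a circumcenter `c` equidistant from the three vertices).  Then
`1/√(1-|s|) ≤ 2√2 · R_K`. -/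
theorem one_div_sqrt_le_circumradius
    (s t α : ℝ) (hst : s ^ 2 + t ^ 2 = 1) (ht : 0 < t) (hα0 : 0 < α) (hα1 : α ≤ 1)
    (hs : s ≤ α / 2)
    (R : ℝ) (c : E2)
    (hc1 : dist c (pt 0 0) = R) (hc2 : dist c (pt 1 0) = R)
    (hc3 : dist c (pt (α * s) (α * t)) = R) :
    1 / Real.sqrt (1 - |s|) ≤ 2 * Real.sqrt 2 * R :=
  one_div_sqrt_le_circumradius_general s t α hst ht hα0 hs R c hc1 hc2 hc3
end

section
/- Let K be the triangle with vertices (0,0), (1,0), (αs, αt), where s² + t² = 1, t > 0, 0 < α ≤ 1, and the edge joining (1,0) and (αs,αt) is the longest edge of K. Then B_2^{1,1}(K) := sup_{v ∈ T_2^1(K)} |v|_{1,2,K}/|v|_{2,2,K} ≤ 4√2 · C_{1,2} · R_K, where R_K is the circumradius of K and C_{1,2} is any constant with B_2^{1,1}(K_α) ≤ C_{1,2} for every right triangle K_α with vertices (0,0), (1,0), (0,α), 0 < α ≤ 1. -/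
open MeasureTheory ENNReal Real

/-! The shear `F(x, y) = (x + s y, t y)`, of determinant `t`, maps the right triangle `K_α` with
vertices `(0,0)`, `(1,0)`, `(0,α)` onto `K`, and `v ↦ v ∘ F` maps `T_2^1(K)` into `T_2^1(K_α)`.
The chain rule and `s² + t² = 1` give the pointwise bounds `|∇v|² ∘ F ≤ (2/t²) |∇(v ∘ F)|²` and
`|D²(v ∘ F)|² ≤ 4 |D²v|² ∘ F`; after the change of variables these become
`|v|_{1,K} ≤ √(2/t) |v ∘ F|_{1,K_α}` and `|v ∘ F|_{2,K_α} ≤ √(4/t) |v|_{2,K}`, so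
`B(K) ≤ (2√2/t) B(K_α) ≤ (2√2/t) C`. By the law of sines the longest edge, opposite the vertex
`(0,0)` whose angle has sine `t`, has length `2 t R_K`; it is at least the unit edge, so
`1/t ≤ 2 R_K`. -/

theorem lintegral_image_continuousLinearMap {E : Type*} [NormedAddCommGroup E] [NormedSpace ℝ E]
    [FiniteDimensional ℝ E] [MeasurableSpace E] [BorelSpace E] (μ : Measure E)
    [μ.IsAddHaarMeasure] {L : E →L[ℝ] E} (hL : L.det ≠ 0) {S : Set E} (hS : MeasurableSet S)
    (g : E → ℝ≥0∞) :
    ∫⁻ y in L '' S, g y ∂μ = ENNReal.ofReal |L.det| * ∫⁻ x in S, g (L x) ∂μ := by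
  rw [lintegral_image_eq_lintegral_abs_det_fderiv_mul μ hS
    (fun x _ => L.hasFDerivAt.hasFDerivWithinAt)
    (LinearMap.equivOfDetNeZero _ hL).injective.injOn, lintegral_const_mul' _ _ ofReal_ne_top]

theorem ENNReal.div_le_mul_mul_div {a b a' b' p q : ℝ≥0∞} (ha : a ≤ p * a') (hb : b' ≤ q * b)
    (hq₀ : q ≠ 0) (hq : q ≠ ∞) : a / b ≤ p * q * (a' / b') := by
  have hinv : b⁻¹ ≤ q * b'⁻¹ :=
    calc b⁻¹ = q * (q * b)⁻¹ := by
          rw [ENNReal.mul_inv (Or.inl hq₀) (Or.inl hq), ← mul_assoc,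
            ENNReal.mul_inv_cancel hq₀ hq, one_mul]
      _ ≤ q * b'⁻¹ := by gcongr
  calc a / b = a * b⁻¹ := div_eq_mul_inv a b
    _ ≤ p * a' * (q * b'⁻¹) := by gcongr
    _ = p * q * (a' / b') := by rw [div_eq_mul_inv]; ring

theorem isCompact_triSet (x₁ x₂ x₃ : E2) : IsCompact (triSet x₁ x₂ x₃) :=
  (Set.toFinite {x₁, x₂, x₃}).isCompact_convexHull (𝕜 := ℝ)

theorem image_triSet (L : E2 →L[ℝ] E2) (x₁ x₂ x₃ : E2) :
    L '' triSet x₁ x₂ x₃ = triSet (L x₁) (L x₂) (L x₃) := by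
  rw [triSet, triSet, ← L.coe_coe, LinearMap.image_convexHull]
  simp [Set.image_insert_eq]

theorem lagrangeNodes_one (x₁ x₂ x₃ : E2) : lagrangeNodes 1 x₁ x₂ x₃ = {x₁, x₂, x₃} := by
  ext x
  constructor
  · rintro ⟨a, hsum, rfl⟩
    obtain ⟨h₀, h₁, h₂⟩ | ⟨h₀, h₁, h₂⟩ | ⟨h₀, h₁, h₂⟩ :
        (a 0 = 1 ∧ a 1 = 0 ∧ a 2 = 0) ∨ (a 0 = 0 ∧ a 1 = 1 ∧ a 2 = 0) ∨
          (a 0 = 0 ∧ a 1 = 0 ∧ a 2 = 1) := by omega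
    all_goals simp [h₀, h₁, h₂]
  · rintro (rfl | rfl | rfl)
    · exact ⟨![1, 0, 0], by simp, by simp⟩
    · exact ⟨![0, 1, 0], by simp, by simp⟩
    · exact ⟨![0, 0, 1], by simp, by simp⟩

theorem pt_apply_zero (a b : ℝ) : pt a b 0 = a := rfl

theorem pt_apply_one (a b : ℝ) : pt a b 1 = b := rfl

theorem dist_sq_eq (x y : E2) : dist x y ^ 2 = (x 0 - y 0) ^ 2 + (x 1 - y 1) ^ 2 := by
  rw [EuclideanSpace.dist_eq, Real.sq_sqrt (by positivity)]
  simp [Fin.sum_univ_two, Real.dist_eq, sq_abs]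

section Derivatives

variable {f g : E2 → ℝ}

theorem contDiff_pderiv2 {n : ℕ} (hf : ContDiff ℝ (n + 1 : ℕ) f) (i : Fin 2) :
    ContDiff ℝ n (pderiv2 i f) :=
  (ContinuousLinearMap.apply ℝ ℝ (EuclideanSpace.single i 1)).contDiff.comp
    (hf.fderiv_right (by norm_cast))

theorem contDiff_iterate_pderiv2 {n k : ℕ} (hf : ContDiff ℝ (n + k : ℕ) f) (i : Fin 2) :
    ContDiff ℝ n ((pderiv2 i)^[k] f) := by
  induction k generalizing f with
  | zero => exact hf
  | succ k ih =>
    rw [Function.iterate_succ_apply]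
    exact ih (contDiff_pderiv2 hf i)

theorem contDiff_pdxy {n a b : ℕ} (hf : ContDiff ℝ (n + a + b : ℕ) f) :
    ContDiff ℝ n (pdxy a b f) :=
  contDiff_iterate_pderiv2 (contDiff_iterate_pderiv2 hf 1) 0

theorem continuous_pdxy {a b : ℕ} (hf : ContDiff ℝ (a + b : ℕ) f) : Continuous (pdxy a b f) :=
  (contDiff_pdxy (n := 0) (by simpa using hf)).continuous

theorem pderiv2_comp_continuousLinearMap (hf : Differentiable ℝ f) (L : E2 →L[ℝ] E2)
    (i : Fin 2) :
    pderiv2 i (fun x => f (L x)) = fun x => fderiv ℝ f (L x) (L (EuclideanSpace.single i 1)) := by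
  funext x
  simp [pderiv2, fderiv_fun_comp x (hf (L x)) L.differentiableAt]

theorem pderiv2_const_mul_add_const_mul (hf : Differentiable ℝ f) (hg : Differentiable ℝ g)
    (a b : ℝ) (i : Fin 2) :
    pderiv2 i (fun x => a * f x + b * g x) = fun x => a * pderiv2 i f x + b * pderiv2 i g x := by
  funext x
  simp [pderiv2, fderiv_fun_add ((hf x).const_mul a) ((hg x).const_mul b),
    fderiv_const_mul (hf x), fderiv_const_mul (hg x)]

theorem pderiv2_comm (hf : ContDiff ℝ 2 f) (i j : Fin 2) :
    pderiv2 i (pderiv2 j f) = pderiv2 j (pderiv2 i f) := by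
  funext x
  have hd : Differentiable ℝ (fderiv ℝ f) :=
    (hf.fderiv_right (m := 1) le_rfl).differentiable one_ne_zero
  have hsnd (k l : Fin 2) : pderiv2 k (pderiv2 l f) x
      = fderiv ℝ (fderiv ℝ f) x (EuclideanSpace.single k 1) (EuclideanSpace.single l 1) := by
    have : pderiv2 l f = ContinuousLinearMap.apply ℝ ℝ (EuclideanSpace.single l 1) ∘ fderiv ℝ f :=
      rfl
    simp [pderiv2, this, fderiv_comp x (ContinuousLinearMap.differentiableAt _) (hd x)]
  rw [hsnd, hsnd, (hf.contDiffAt.isSymmSndFDerivAt (by simp)).eq]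

end Derivatives

noncomputable def sobDensity (m : ℕ) (f : E2 → ℝ) (x : E2) : ℝ :=
  ∑ i : Fin (m + 1), pdxy i (m - i) f x ^ 2

theorem sobDensity_one (f : E2 → ℝ) (x : E2) :
    sobDensity 1 f x = pderiv2 1 f x ^ 2 + pderiv2 0 f x ^ 2 := by
  simp [sobDensity, Fin.sum_univ_succ, pdxy]

theorem sobDensity_two (f : E2 → ℝ) (x : E2) :
    sobDensity 2 f x = pderiv2 1 (pderiv2 1 f) x ^ 2 + pderiv2 0 (pderiv2 1 f) x ^ 2
      + pderiv2 0 (pderiv2 0 f) x ^ 2 := by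
  simp [sobDensity, Fin.sum_univ_succ, pdxy, add_assoc]

theorem sobSemi_two {m : ℕ} (K : Set E2) {f : E2 → ℝ} (hf : ContDiff ℝ m f) :
    sobSemi m 2 K f = (∫⁻ x in K, ENNReal.ofReal (sobDensity m f x)) ^ (1 / 2 : ℝ) := by
  have hsq (r : ℝ) : ENNReal.ofReal |r| ^ (2 : ℝ) = ENNReal.ofReal (r ^ 2) := by
    rw [ENNReal.ofReal_rpow_of_nonneg (abs_nonneg _) zero_le_two, Real.rpow_two, sq_abs]
  have hmeas (i : Fin (m + 1)) : Measurable fun x => ENNReal.ofReal (pdxy i (m - i) f x ^ 2) :=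
    ENNReal.measurable_ofReal.comp
      ((continuous_pdxy (hf.of_le (by norm_cast; omega))).pow 2).measurable
  simp only [sobSemi, if_neg ofNat_ne_top, toReal_ofNat, sobDensity, hsq]
  rw [← lintegral_finsetSum _ fun i _ => hmeas i]
  simp only [ENNReal.ofReal_sum_of_nonneg fun i _ => sq_nonneg _]

theorem sobSemi_two_le_of_lintegral_le {m n : ℕ} {K K' : Set E2} {f g : E2 → ℝ}
    (hf : ContDiff ℝ m f) (hg : ContDiff ℝ n g) {c : ℝ} (hc : 0 ≤ c)
    (h : ∫⁻ x in K, ENNReal.ofReal (sobDensity m f x)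
      ≤ ENNReal.ofReal c * ∫⁻ x in K', ENNReal.ofReal (sobDensity n g x)) :
    sobSemi m 2 K f ≤ ENNReal.ofReal √c * sobSemi n 2 K' g := by
  rw [sobSemi_two K hf, sobSemi_two K' hg, Real.sqrt_eq_rpow,
    ← ENNReal.ofReal_rpow_of_nonneg hc (by norm_num),
    ← ENNReal.mul_rpow_of_nonneg _ _ (by norm_num)]
  gcongr

theorem memW_of_contDiff {k : ℕ} {p : ℝ≥0∞} (hp : p ≠ ∞) {K : Set E2} (hK : IsCompact K)
    {f : E2 → ℝ} (hf : ContDiff ℝ k f) : MemW k p K f := by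
  refine ⟨hf, fun m hm => ?_⟩
  rw [sobSemi, if_neg hp]
  refine ENNReal.rpow_ne_top_of_nonneg (by positivity) (ENNReal.sum_ne_top.2 fun i _ => ?_)
  have hg : Continuous (pdxy i (m - i) f) := continuous_pdxy (hf.of_le (by norm_cast; omega))
  simp_rw [ENNReal.ofReal_rpow_of_nonneg (abs_nonneg _) toReal_nonneg]
  exact (setLIntegral_lt_top_of_isCompact hK.measure_ne_top hK
    (continuous_real_toNNReal.comp (hg.abs.rpow_const fun _ => Or.inr toReal_nonneg))).ne

noncomputable def shear (s t : ℝ) : E2 →L[ℝ] E2 := Matrix.toEuclideanCLM (𝕜 := ℝ) !![1, s; 0, t]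

section Shear

variable {s t : ℝ} {f : E2 → ℝ}

theorem shear_pt (s t a b : ℝ) : shear s t (pt a b) = pt (a + s * b) (t * b) := by
  ext i; fin_cases i <;> simp [shear, pt, mul_comm]

theorem shear_single_zero (s t : ℝ) :
    shear s t (EuclideanSpace.single 0 1) = EuclideanSpace.single 0 1 := by
  ext i; fin_cases i <;> simp [shear, Matrix.mulVec, dotProduct]

theorem shear_single_one (s t : ℝ) : shear s t (EuclideanSpace.single 1 1) =
    s • EuclideanSpace.single 0 1 + t • EuclideanSpace.single 1 1 := by
  ext i; fin_cases i <;> simp [shear, Matrix.mulVec, dotProduct]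

theorem det_shear (s t : ℝ) : (shear s t).det = t := by
  rw [ContinuousLinearMap.det, shear, Matrix.coe_toEuclideanCLM_eq_toEuclideanLin,
    Matrix.toEuclideanLin_eq_toLin_orthonormal, LinearMap.det_toLin, Matrix.det_fin_two_of]
  ring

theorem pderiv2_zero_comp_shear (hf : Differentiable ℝ f) :
    pderiv2 0 (fun x => f (shear s t x)) = fun x => pderiv2 0 f (shear s t x) := by
  rw [pderiv2_comp_continuousLinearMap hf, shear_single_zero]; rfl

theorem pderiv2_one_comp_shear (hf : Differentiable ℝ f) :
    pderiv2 1 (fun x => f (shear s t x)) =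
      fun x => s * pderiv2 0 f (shear s t x) + t * pderiv2 1 f (shear s t x) := by
  rw [pderiv2_comp_continuousLinearMap hf, shear_single_one]
  simp [pderiv2]

theorem shear_grad_sq_le (hst : s ^ 2 + t ^ 2 = 1) (ht : 0 < t) (a b : ℝ) :
    b ^ 2 + a ^ 2 ≤ 2 / t ^ 2 * ((s * a + t * b) ^ 2 + a ^ 2) := by
  rw [div_mul_eq_mul_div, le_div_iff₀ (by positivity)]
  nlinarith [sq_nonneg (2 * s * a + t * b), mul_nonneg (sq_nonneg t) (sq_nonneg a)]

theorem shear_hess_sq_le (hst : s ^ 2 + t ^ 2 = 1) (a b c : ℝ) :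
    (s ^ 2 * a + 2 * s * t * b + t ^ 2 * c) ^ 2 + (s * a + t * b) ^ 2 + a ^ 2
      ≤ 4 * (c ^ 2 + b ^ 2 + a ^ 2) := by
  have h₁ : (s * a + t * b) ^ 2 ≤ a ^ 2 + b ^ 2 := by
    nlinarith [sq_nonneg (t * a - s * b)]
  have h₂ : (s ^ 2 * a + 2 * s * t * b + t ^ 2 * c) ^ 2
      ≤ (1 + 2 * s ^ 2 * t ^ 2) * (a ^ 2 + b ^ 2 + c ^ 2) := by
    nlinarith [sq_nonneg (s ^ 2 * b - 2 * s * t * a), sq_nonneg (s ^ 2 * c - t ^ 2 * a),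
      sq_nonneg (2 * s * t * c - t ^ 2 * b), sq_nonneg a, sq_nonneg b, sq_nonneg c,
      congrArg (· ^ 2) hst]
  have h₃ : s ^ 2 * t ^ 2 ≤ 1 / 4 := by nlinarith [sq_nonneg (s ^ 2 - t ^ 2)]
  nlinarith [sq_nonneg a, sq_nonneg b, sq_nonneg c]

theorem sobDensity_one_le_comp_shear (hst : s ^ 2 + t ^ 2 = 1) (ht : 0 < t)
    (hf : Differentiable ℝ f) (x : E2) :
    sobDensity 1 f (shear s t x) ≤ 2 / t ^ 2 * sobDensity 1 (fun y => f (shear s t y)) x := by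
  rw [sobDensity_one, sobDensity_one, pderiv2_zero_comp_shear hf, pderiv2_one_comp_shear hf]
  exact shear_grad_sq_le hst ht _ _

theorem sobDensity_two_comp_shear_le (hst : s ^ 2 + t ^ 2 = 1) (hf : ContDiff ℝ 2 f) (x : E2) :
    sobDensity 2 (fun y => f (shear s t y)) x ≤ 4 * sobDensity 2 f (shear s t x) := by
  have hd : Differentiable ℝ f := hf.differentiable two_ne_zero
  have hd₀ : Differentiable ℝ (pderiv2 0 f) :=
    (contDiff_pderiv2 (n := 1) hf 0).differentiable one_ne_zero
  have hd₁ : Differentiable ℝ (pderiv2 1 f) :=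
    (contDiff_pderiv2 (n := 1) hf 1).differentiable one_ne_zero
  have hd₀' : Differentiable ℝ (fun y => pderiv2 0 f (shear s t y)) :=
    hd₀.comp (shear s t).differentiable
  have hd₁' : Differentiable ℝ (fun y => pderiv2 1 f (shear s t y)) :=
    hd₁.comp (shear s t).differentiable
  rw [sobDensity_two, sobDensity_two, pderiv2_zero_comp_shear hd, pderiv2_zero_comp_shear hd₀,
    pderiv2_one_comp_shear hd, pderiv2_const_mul_add_const_mul hd₀' hd₁',
    pderiv2_const_mul_add_const_mul hd₀' hd₁', pderiv2_zero_comp_shear hd₀,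
    pderiv2_zero_comp_shear hd₁, pderiv2_one_comp_shear hd₀, pderiv2_one_comp_shear hd₁,
    pderiv2_comm hf 1 0]
  linear_combination shear_hess_sq_le hst (pderiv2 0 (pderiv2 0 f) (shear s t x))
    (pderiv2 0 (pderiv2 1 f) (shear s t x)) (pderiv2 1 (pderiv2 1 f) (shear s t x))

theorem sobSemi_one_image_shear_le (hst : s ^ 2 + t ^ 2 = 1) (ht : 0 < t) {S : Set E2}
    (hS : MeasurableSet S) (hf : ContDiff ℝ 2 f) :
    sobSemi 1 2 (shear s t '' S) f
      ≤ ENNReal.ofReal √(2 / t) * sobSemi 1 2 S (fun y => f (shear s t y)) := by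
  refine sobSemi_two_le_of_lintegral_le (hf.of_le (by norm_num))
    ((hf.comp (shear s t).contDiff).of_le (by norm_num)) (by positivity) ?_
  rw [lintegral_image_continuousLinearMap volume (by rw [det_shear]; exact ht.ne') hS, det_shear,
    abs_of_pos ht]
  calc ENNReal.ofReal t * ∫⁻ x in S, ENNReal.ofReal (sobDensity 1 f (shear s t x))
      ≤ ENNReal.ofReal t * ∫⁻ x in S, ENNReal.ofReal (2 / t ^ 2) *
          ENNReal.ofReal (sobDensity 1 (fun y => f (shear s t y)) x) := by
        gcongr with x
        rw [← ENNReal.ofReal_mul (by positivity)]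
        exact ENNReal.ofReal_le_ofReal
          (sobDensity_one_le_comp_shear hst ht (hf.differentiable two_ne_zero) x)
    _ = ENNReal.ofReal (2 / t) *
          ∫⁻ x in S, ENNReal.ofReal (sobDensity 1 (fun y => f (shear s t y)) x) := by
        rw [lintegral_const_mul' _ _ ofReal_ne_top, ← mul_assoc, ← ENNReal.ofReal_mul ht.le]
        congr 2
        field_simp

theorem sobSemi_two_comp_shear_le (hst : s ^ 2 + t ^ 2 = 1) (ht : 0 < t) {S : Set E2}
    (hS : MeasurableSet S) (hf : ContDiff ℝ 2 f) :
    sobSemi 2 2 S (fun y => f (shear s t y))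
      ≤ ENNReal.ofReal √(4 / t) * sobSemi 2 2 (shear s t '' S) f := by
  refine sobSemi_two_le_of_lintegral_le (hf.comp (shear s t).contDiff) hf (by positivity) ?_
  rw [lintegral_image_continuousLinearMap volume (by rw [det_shear]; exact ht.ne') hS, det_shear,
    abs_of_pos ht, ← mul_assoc, ← ENNReal.ofReal_mul (by positivity), div_mul_cancel₀ _ ht.ne',
    ← lintegral_const_mul' _ _ ofReal_ne_top]
  gcongr with x
  rw [← ENNReal.ofReal_mul zero_le_four]
  exact ENNReal.ofReal_le_ofReal (sobDensity_two_comp_shear_le hst hf x)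

theorem Bconst_shear_le (hst : s ^ 2 + t ^ 2 = 1) (ht : 0 < t) (x₁ x₂ x₃ : E2) :
    Bconst 1 1 2 (shear s t x₁) (shear s t x₂) (shear s t x₃)
      ≤ ENNReal.ofReal (2 * √2 / t) * Bconst 1 1 2 x₁ x₂ x₃ := by
  refine iSup_le fun ⟨v, ⟨(hv : ContDiff ℝ 2 v), _⟩, hv_nodes⟩ => ?_
  have hK := isCompact_triSet x₁ x₂ x₃
  have hw : MemW (1 + 1) 2 (triSet x₁ x₂ x₃) (fun y => v (shear s t y)) ∧
      ∀ x ∈ lagrangeNodes 1 x₁ x₂ x₃, v (shear s t x) = 0 := by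
    refine ⟨memW_of_contDiff ofNat_ne_top hK (hv.comp (shear s t).contDiff), ?_⟩
    rw [lagrangeNodes_one] at hv_nodes ⊢
    rintro x (rfl | rfl | rfl) <;> apply hv_nodes <;> simp
  have hconst : ENNReal.ofReal √(2 / t) * ENNReal.ofReal √(4 / t)
      = ENNReal.ofReal (2 * √2 / t) := by
    rw [← ENNReal.ofReal_mul (Real.sqrt_nonneg _), ← Real.sqrt_mul (by positivity),
      show 2 / t * (4 / t) = (2 * √2 / t) ^ 2 by
        rw [div_pow, mul_pow, Real.sq_sqrt zero_le_two]; ring,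
      Real.sqrt_sq (by positivity)]
  simp only [← image_triSet]
  calc _ ≤ ENNReal.ofReal √(2 / t) * ENNReal.ofReal √(4 / t) * _ :=
        ENNReal.div_le_mul_mul_div (sobSemi_one_image_shear_le hst ht hK.measurableSet hv)
          (sobSemi_two_comp_shear_le hst ht hK.measurableSet hv)
          (ENNReal.ofReal_pos.2 (by positivity)).ne' ofReal_ne_top
    _ ≤ _ := by
        rw [hconst]
        gcongr
        exact le_iSup_of_le ⟨_, hw⟩ le_rfl

theorem two_mul_mul_circumradius_eq_dist (hst : s ^ 2 + t ^ 2 = 1) (ht : 0 ≤ t) {α : ℝ}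
    (hα : α ≠ 0) {R : ℝ} {c : E2} (hc₁ : dist c (pt 0 0) = R) (hc₂ : dist c (pt 1 0) = R)
    (hc₃ : dist c (pt (α * s) (α * t)) = R) :
    2 * t * R = dist (pt 1 0) (pt (α * s) (α * t)) := by
  have hR : 0 ≤ R := hc₁ ▸ dist_nonneg
  have e₁ := congrArg (· ^ 2) hc₁
  have e₂ := congrArg (· ^ 2) hc₂
  have e₃ := congrArg (· ^ 2) hc₃
  simp only [dist_sq_eq, pt_apply_zero, pt_apply_one, sub_zero] at e₁ e₂ e₃
  have hc0 : c 0 = 1 / 2 := by linear_combination (e₁ - e₂) / 2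
  have hc1 : 2 * t * c 1 = α - s := mul_left_cancel₀ hα (by
    linear_combination e₁ - e₃ + α ^ 2 * hst - 2 * α * s * hc0)
  rw [← sq_eq_sq₀ (by positivity) dist_nonneg, dist_sq_eq]
  simp only [pt_apply_zero, pt_apply_one]
  linear_combination -4 * t ^ 2 * e₁ + 4 * t ^ 2 * (c 0 + 1 / 2) * hc0 + (2 * t * c 1 + α - s) * hc1
    + (1 - α ^ 2) * hst

end Shear

theorem Bconst_le_circumradius_p_two_general
    (s t α : ℝ) (hst : s ^ 2 + t ^ 2 = 1) (ht : 0 < t) (hα0 : 0 < α) (hα1 : α ≤ 1)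
    (hlong1 : dist (pt 0 0) (pt 1 0) ≤ dist (pt 1 0) (pt (α * s) (α * t)))
    (R : ℝ) (c : E2)
    (hc1 : dist c (pt 0 0) = R) (hc2 : dist c (pt 1 0) = R)
    (hc3 : dist c (pt (α * s) (α * t)) = R)
    (C : ℝ)
    (hC : ∀ β : ℝ, 0 < β → β ≤ 1 →
      Bconst 1 1 2 (pt 0 0) (pt 1 0) (pt 0 β) ≤ ENNReal.ofReal C) :
    Bconst 1 1 2 (pt 0 0) (pt 1 0) (pt (α * s) (α * t)) ≤
      ENNReal.ofReal (4 * Real.sqrt 2 * C * R) := by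
  have hR : 1 ≤ 2 * t * R := by
    rw [two_mul_mul_circumradius_eq_dist hst ht.le hα0.ne' hc1 hc2 hc3]
    simpa [EuclideanSpace.dist_eq, pt] using hlong1
  obtain ⟨h₁, h₂, h₃⟩ : shear s t (pt 0 0) = pt 0 0 ∧ shear s t (pt 1 0) = pt 1 0 ∧
      shear s t (pt 0 α) = pt (α * s) (α * t) := by
    simp only [shear_pt]
    refine ⟨?_, ?_, ?_⟩ <;> congr 1 <;> ring
  calc Bconst 1 1 2 (pt 0 0) (pt 1 0) (pt (α * s) (α * t))
      = Bconst 1 1 2 (shear s t (pt 0 0)) (shear s t (pt 1 0)) (shear s t (pt 0 α)) := by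
        rw [h₁, h₂, h₃]
    _ ≤ ENNReal.ofReal (2 * √2 / t) * ENNReal.ofReal C := by
        grw [Bconst_shear_le hst ht, hC α hα0 hα1]
    _ ≤ ENNReal.ofReal (4 * √2 * C * R) := by
        rcases le_or_gt C 0 with hC0 | hC0
        · simp [ENNReal.ofReal_of_nonpos hC0]
        rw [← ENNReal.ofReal_mul (by positivity), div_mul_eq_mul_div]
        gcongr
        rw [div_le_iff₀ ht]
        nlinarith [mul_le_mul_of_nonneg_left hR (by positivity : (0 : ℝ) ≤ 2 * √2 * C)]

/-- Corollary 3.3 / `alternateproof`.  Let `K` be the triangle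
with vertices `(0,0)`, `(1,0)`, `(αs, αt)` (`s² + t² = 1`, `t > 0`, `0 < α ≤ 1`,
the edge joining `(1,0)` and `(αs,αt)` being the longest), let `R_K` be its
circumradius (characterized by a circumcenter `c`), and let `C₁₂` be any constant
with `B_2^{1,1}(K_β) ≤ C₁₂` for every right triangle `K_β` with vertices
`(0,0)`, `(1,0)`, `(0,β)`, `0 < β ≤ 1`.  Then `B_2^{1,1}(K) ≤ 4√2 · C₁₂ · R_K`. -/
theorem Bconst_le_circumradius_p_two
    (s t α : ℝ) (hst : s ^ 2 + t ^ 2 = 1) (ht : 0 < t) (hα0 : 0 < α) (hα1 : α ≤ 1)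
    (hlong1 : dist (pt 0 0) (pt 1 0) ≤ dist (pt 1 0) (pt (α * s) (α * t)))
    (hlong2 : dist (pt 0 0) (pt (α * s) (α * t)) ≤ dist (pt 1 0) (pt (α * s) (α * t)))
    (R : ℝ) (c : E2)
    (hc1 : dist c (pt 0 0) = R) (hc2 : dist c (pt 1 0) = R)
    (hc3 : dist c (pt (α * s) (α * t)) = R)
    (C : ℝ)
    (hC : ∀ β : ℝ, 0 < β → β ≤ 1 →
      Bconst 1 1 2 (pt 0 0) (pt 1 0) (pt 0 β) ≤ ENNReal.ofReal C) :
    Bconst 1 1 2 (pt 0 0) (pt 1 0) (pt (α * s) (α * t)) ≤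
      ENNReal.ofReal (4 * Real.sqrt 2 * C * R) :=
  Bconst_le_circumradius_p_two_general s t α hst ht hα0 hα1 hlong1 R c hc1 hc2 hc3 C hC
end
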